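/- arXiv:1907.04836 — 7 statements merged into one kernel-verified Lean document; each statement's English description precedes it below -/
import Mathlib

section
/- Let z̃ ∈ ℂ satisfy c·z̃ − a ≠ 0 and z̃ ≠ z̃_α for every α. Then (ad−bc)/(c·z̃−a)² · ( Σ_{α=1}^{n} Σ_{p=0}^{m_α−1} ℓ^α_p/( f⁻¹(z̃) − z_α)^{p+1} − ℓ^∞ ) = Σ_{α=1}^{n} Σ_{p=0}^{m_α−1} ℓ̃^α_p/(z̃−z̃_α)^{p+1} + ℓ̃^{(∞)}_0/(z̃ − a/c) + ℓ̃^{(∞)}_1/(z̃ − a/c)², where f⁻¹(z̃) = −(d·z̃−b)/(c·z̃−a), ℓ̃^{(∞)}_0 = −Σ_{α=1}^{n} ℓ^α_0 and ℓ̃^{(∞)}_1 = −ℓ^∞(ad−bc)/c². That is, the twist function with a constant term (a double pole at infinity), rewritten in the coordinate z̃ = f(z), acquires an additional site of multiplicity two at z̃ = a/c with levels ℓ̃^{(∞)}_0 and ℓ̃^{(∞)}_1. -/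
/-!
Write `A = cz + d`, `U = z̃ - f(z)` and `E = a - cz̃`. Then `f⁻¹(z̃) - z = AU/E` and
`EA = (ad - bc) - cAU`, so the conformal factor `(ad - bc)/E²` turns a pole `ℓ/(f⁻¹(z̃) - z)^(p+1)`
with `p ≥ 1` into `(ad - bc) ℓ (ad - bc - cAU)^(p-1) / (A^(2p) U^(p+1))`. Expanding the binomial
gives poles at `f(z)` of orders `2, …, p+1`, and collecting them by order yields the levels `ℓ̃`.
A simple pole splits by partial fractions into `ℓ/U` and the residue `-ℓ` at `a/c`, while the
constant `-ℓ^∞` becomes the double pole at `a/c`.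
-/

open Finset

section Moebius

variable {K : Type*} [Field K] {a b c d z w : K}

theorem mul_sub_pow_div_eq_sum {A U : K} (hA : A ≠ 0) (hU : U ≠ 0) (D c L : K) (k : ℕ) :
    D * L * (D - c * A * U) ^ k / (A ^ (2 * k + 2) * U ^ (k + 2))
      = ∑ q ∈ Icc 1 (k + 1), (k.choose (q - 1) : K) * (-c) ^ (k + 1 - q) * D ^ q
          / A ^ (q + (k + 1)) * L / U ^ (q + 1) := by
  rw [sub_eq_add_neg, add_pow, mul_sum, sum_div, ← Ico_add_one_right_eq_Icc,
    sum_Ico_eq_sum_range, Nat.add_sub_cancel]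
  refine sum_congr rfl fun j hj => ?_
  obtain ⟨s, rfl⟩ := Nat.exists_eq_add_of_le (Nat.lt_succ_iff.mp (mem_range.mp hj))
  rw [show j + s + 1 - (1 + j) = s by omega, Nat.add_sub_cancel_left, Nat.add_sub_cancel_left]
  field_simp
  ring

theorem moebius_inv_sub (hA : c * z + d ≠ 0) (hE : c * w - a ≠ 0) :
    -((d * w - b) / (c * w - a)) - z
      = (c * z + d) * (w - (a * z + b) / (c * z + d)) / (a - c * w) := by
  have hE' : a - c * w ≠ 0 := by rwa [← neg_sub, neg_ne_zero]
  rw [mul_sub, mul_div_cancel₀ _ hA, eq_div_iff hE']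
  linear_combination div_mul_cancel₀ (d * w - b) hE

theorem sub_mul_denom_eq_det_sub (hA : c * z + d ≠ 0) :
    (a - c * w) * (c * z + d)
      = a * d - b * c - c * (c * z + d) * (w - (a * z + b) / (c * z + d)) := by
  field_simp
  ring

theorem moebius_pullback_simple_pole (hc : c ≠ 0) (hA : c * z + d ≠ 0) (hE : c * w - a ≠ 0)
    (hU : w - (a * z + b) / (c * z + d) ≠ 0) (L : K) :
    (a * d - b * c) / (c * w - a) ^ 2 * (L / (-((d * w - b) / (c * w - a)) - z))
      = L / (w - (a * z + b) / (c * z + d)) - L / (w - a / c) := by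
  have hrel := sub_mul_denom_eq_det_sub (a := a) (b := b) (w := w) hA
  have hE' : a - c * w ≠ 0 := by rwa [← neg_sub, neg_ne_zero]
  rw [moebius_inv_sub hA hE, show w - a / c = -(a - c * w) / c by field_simp; ring,
    show (c * w - a) ^ 2 = (a - c * w) ^ 2 by ring]
  generalize a - c * w = E at *
  generalize w - (a * z + b) / (c * z + d) = U at *
  generalize c * z + d = A at *
  generalize a * d - b * c = D at *
  field_simp
  linear_combination (-L) * hrel

theorem moebius_pullback_higher_pole (hA : c * z + d ≠ 0) (hE : c * w - a ≠ 0)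
    (hU : w - (a * z + b) / (c * z + d) ≠ 0) {p : ℕ} (hp : 1 ≤ p) (L : K) :
    (a * d - b * c) / (c * w - a) ^ 2 * (L / (-((d * w - b) / (c * w - a)) - z) ^ (p + 1))
      = ∑ q ∈ Icc 1 p, ((p - 1).choose (q - 1) : K) * (-c) ^ (p - q) * (a * d - b * c) ^ q
          / (c * z + d) ^ (q + p) * L / (w - (a * z + b) / (c * z + d)) ^ (q + 1) := by
  obtain ⟨k, rfl⟩ : ∃ k, p = k + 1 := ⟨p - 1, by omega⟩
  have hE' : a - c * w ≠ 0 := by rwa [← neg_sub, neg_ne_zero]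
  rw [Nat.add_sub_cancel, ← mul_sub_pow_div_eq_sum hA hU, moebius_inv_sub hA hE,
    show (c * w - a) ^ 2 = (a - c * w) ^ 2 by ring, ← sub_mul_denom_eq_det_sub hA]
  generalize a - c * w = E at *
  generalize w - (a * z + b) / (c * z + d) = U at *
  generalize c * z + d = A at *
  simp only [div_pow, mul_pow]
  field_simp
  ring

theorem moebius_pullback_site (hc : c ≠ 0) (hA : c * z + d ≠ 0) (hE : c * w - a ≠ 0)
    (hU : w - (a * z + b) / (c * z + d) ≠ 0) {m : ℕ} (hm : 1 ≤ m) (ℓ ℓt : ℕ → K)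
    (hℓt0 : ℓt 0 = ℓ 0)
    (hℓtp : ∀ p, 1 ≤ p → p ≤ m - 1 →
      ℓt p = ∑ k ∈ Icc p (m - 1), (k - 1).choose (p - 1) * (-c) ^ (k - p) * (a * d - b * c) ^ p
          / (c * z + d) ^ (p + k) * ℓ k) :
    (a * d - b * c) / (c * w - a) ^ 2
        * ∑ p ∈ range m, ℓ p / (-((d * w - b) / (c * w - a)) - z) ^ (p + 1)
      = ∑ p ∈ range m, ℓt p / (w - (a * z + b) / (c * z + d)) ^ (p + 1) - ℓ 0 / (w - a / c) := by
  rw [sum_range_eq_add_Ico _ hm, sum_range_eq_add_Ico _ hm, mul_add, zero_add, pow_one, pow_one,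
    moebius_pullback_simple_pole hc hA hE hU, hℓt0, mul_sum,
    sum_congr rfl fun p hp => moebius_pullback_higher_pole hA hE hU (mem_Ico.mp hp).1 (ℓ p),
    sum_comm' (t' := Ico 1 m) (s' := fun q => Icc q (m - 1))
      (fun p q => by simp only [mem_Ico, mem_Icc]; omega)]
  have hlevels : ∀ q ∈ Ico 1 m,
      ∑ p ∈ Icc q (m - 1), ((p - 1).choose (q - 1) : K) * (-c) ^ (p - q) * (a * d - b * c) ^ q
          / (c * z + d) ^ (q + p) * ℓ p / (w - (a * z + b) / (c * z + d)) ^ (q + 1)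
        = ℓt q / (w - (a * z + b) / (c * z + d)) ^ (q + 1) := fun q hq => by
    rw [mem_Ico] at hq
    rw [hℓtp q hq.1 (by omega), sum_div]
  rw [sum_congr rfl hlevels]
  ring

theorem moebius_pullback_const (hc : c ≠ 0) (hE : c * w - a ≠ 0) (linf : K) :
    (a * d - b * c) / (c * w - a) ^ 2 * linf
      = linf * (a * d - b * c) / c ^ 2 / (w - a / c) ^ 2 := by
  rw [show w - a / c = (c * w - a) / c by field_simp]
  field_simp

end Moebius

theorem statement1_general (n : ℕ) (z : Fin n → ℂ) (m : Fin n → ℕ) (hm : ∀ α, 1 ≤ m α)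
    (ℓ : Fin n → ℕ → ℂ) (linf : ℂ) (a b c d : ℝ)
    (hc : (c : ℂ) ≠ 0)
    (hfin : ∀ α, (c : ℂ) * z α + d ≠ 0)
    (zt : Fin n → ℂ)
    (hzt : ∀ α, zt α = ((a : ℂ) * z α + b) / ((c : ℂ) * z α + d))
    (ℓt : Fin n → ℕ → ℂ)
    (hℓt0 : ∀ α, ℓt α 0 = ℓ α 0)
    (hℓtp : ∀ α p, 1 ≤ p → p ≤ m α - 1 →
      ℓt α p = ∑ k ∈ Finset.Icc p (m α - 1),
        (Nat.choose (k - 1) (p - 1) : ℂ) * (-(c : ℂ)) ^ (k - p) * ((a : ℂ) * d - b * c) ^ p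
          / ((c : ℂ) * z α + d) ^ (p + k) * ℓ α k)
    (w : ℂ) (hw1 : (c : ℂ) * w - a ≠ 0) (hw2 : ∀ α, w ≠ zt α) :
    ((a : ℂ) * d - b * c) / ((c : ℂ) * w - a) ^ 2 *
        ((∑ α, ∑ p ∈ Finset.range (m α),
          ℓ α p / (-(((d : ℂ) * w - b) / ((c : ℂ) * w - a)) - z α) ^ (p + 1)) - linf)
      = (∑ α, ∑ p ∈ Finset.range (m α), ℓt α p / (w - zt α) ^ (p + 1))
        + (-(∑ α, ℓ α 0)) / (w - (a : ℂ) / c)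
        + (-(linf * ((a : ℂ) * d - b * c) / (c : ℂ) ^ 2)) / (w - (a : ℂ) / c) ^ 2 := by
  have hsite : ∀ α, ((a : ℂ) * d - b * c) / ((c : ℂ) * w - a) ^ 2
        * ∑ p ∈ range (m α), ℓ α p / (-(((d : ℂ) * w - b) / ((c : ℂ) * w - a)) - z α) ^ (p + 1)
      = ∑ p ∈ range (m α), ℓt α p / (w - zt α) ^ (p + 1) - ℓ α 0 / (w - (a : ℂ) / c) := by
    intro α
    have hU : w - zt α ≠ 0 := sub_ne_zero.mpr (hw2 α)
    rw [hzt] at hU ⊢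
    exact moebius_pullback_site hc (hfin α) hw1 hU (hm α) (ℓ α) (ℓt α) (hℓt0 α) (hℓtp α)
  rw [mul_sub, mul_sum, sum_congr rfl fun α _ => hsite α, sum_sub_distrib,
    moebius_pullback_const hc hw1, neg_div, neg_div, sum_div]
  ring

/-- The twist function with a constant term `-ℓ^∞` (a double pole at infinity), rewritten
in the coordinate `z̃ = f(z) = (az+b)/(cz+d)` with `c ≠ 0`, acquires an additional site of
multiplicity two at `z̃ = a/c` with levels `ℓ̃^{(∞)}_0 = -∑_α ℓ^α_0` and
`ℓ̃^{(∞)}_1 = -ℓ^∞ (ad-bc)/c²`. -/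
theorem statement1 (n : ℕ) (z : Fin n → ℂ) (m : Fin n → ℕ) (hm : ∀ α, 1 ≤ m α)
    (ℓ : Fin n → ℕ → ℂ) (linf : ℂ) (a b c d : ℝ)
    (hdet : (a : ℂ) * d - b * c ≠ 0) (hc : (c : ℂ) ≠ 0)
    (hfin : ∀ α, (c : ℂ) * z α + d ≠ 0)
    (zt : Fin n → ℂ)
    (hzt : ∀ α, zt α = ((a : ℂ) * z α + b) / ((c : ℂ) * z α + d))
    (ℓt : Fin n → ℕ → ℂ)
    (hℓt0 : ∀ α, ℓt α 0 = ℓ α 0)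
    (hℓtp : ∀ α p, 1 ≤ p → p ≤ m α - 1 →
      ℓt α p = ∑ k ∈ Finset.Icc p (m α - 1),
        (Nat.choose (k - 1) (p - 1) : ℂ) * (-(c : ℂ)) ^ (k - p) * ((a : ℂ) * d - b * c) ^ p
          / ((c : ℂ) * z α + d) ^ (p + k) * ℓ α k)
    (w : ℂ) (hw1 : (c : ℂ) * w - a ≠ 0) (hw2 : ∀ α, w ≠ zt α) :
    ((a : ℂ) * d - b * c) / ((c : ℂ) * w - a) ^ 2 *
        ((∑ α, ∑ p ∈ Finset.range (m α),
          ℓ α p / (-(((d : ℂ) * w - b) / ((c : ℂ) * w - a)) - z α) ^ (p + 1)) - linf)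
      = (∑ α, ∑ p ∈ Finset.range (m α), ℓt α p / (w - zt α) ^ (p + 1))
        + (-(∑ α, ℓ α 0)) / (w - (a : ℂ) / c)
        + (-(linf * ((a : ℂ) * d - b * c) / (c : ℂ) ^ 2)) / (w - (a : ℂ) / c) ^ 2 :=
  statement1_general n z m hm ℓ linf a b c d hc hfin zt hzt ℓt hℓt0 hℓtp w hw1 hw2
end

section
/- Let z̃ ∈ ℂ satisfy c·z̃ − a ≠ 0 and z̃ ≠ z̃_α for every α. Then, in V, ((ad−bc)/(c·z̃−a)²) • Σ_{α=1}^{n} Σ_{p=0}^{m_α−1} (f⁻¹(z̃) − z_α)^{−(p+1)} • J^α_p = Σ_{α=1}^{n} Σ_{p=0}^{m_α−1} (z̃ − z̃_α)^{−(p+1)} • J̃^α_p − (c/(c·z̃−a)) • 𝒞, where f⁻¹(z̃) = −(d·z̃−b)/(c·z̃−a) and 𝒞 = Σ_{α=1}^{n} J^α_0. That is, the Gaudin Lax matrix transforms as a 1-form under the change of spectral parameter, up to a term proportional to the constraint 𝒞. -/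
/-!
Fix `α` and put `D = c z_α + d`, `E = c z̃ - a`, `s = z̃ - z̃_α`. Then `f⁻¹(z̃) - z_α = -D s / E`
and `ad - bc = (c s - E) D`, so the coefficient of `J^α_k` on the left is
`(ad - bc) (-E)^(k-1) / (D s)^(k+1)` for `k ≥ 1`. Expanding `(-E)^(k-1) = ((c s - E) - c s)^(k-1)`
binomially and swapping the resulting triangular double sum produces exactly
`∑_p s^(-(p+1)) J̃^α_p`. For `k = 0` the coefficient is `s⁻¹ - c / E`, and the second part
summed over `α` is the constraint term.
-/

open Finset

theorem Finset.sum_Icc_smul_eq_sum_Icc_smul_of_triangular {R M : Type*} [Semiring R]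
    [AddCommMonoid M] [Module R M] {l N : ℕ} {L S : ℕ → R} {T : ℕ → ℕ → R} {v w : ℕ → M}
    (hL : ∀ k ∈ Icc l N, L k = ∑ p ∈ Icc l k, S p * T p k)
    (hw : ∀ p ∈ Icc l N, w p = ∑ k ∈ Icc p N, T p k • v k) :
    ∑ k ∈ Icc l N, L k • v k = ∑ p ∈ Icc l N, S p • w p := calc
  ∑ k ∈ Icc l N, L k • v k = ∑ k ∈ Icc l N, ∑ p ∈ Icc l k, S p • T p k • v k :=
    sum_congr rfl fun k hk => by simp only [hL k hk, sum_smul, smul_smul]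
  _ = ∑ p ∈ Icc l N, ∑ k ∈ Icc p N, S p • T p k • v k :=
    sum_comm' fun _ _ => by simp only [mem_Icc]; omega
  _ = ∑ p ∈ Icc l N, S p • w p := sum_congr rfl fun p hp => by rw [hw p hp, smul_sum]

section
variable {D E s c Δ : ℂ}

theorem mobius_pullback_coeff_zero (hD : D ≠ 0) (hE : E ≠ 0) (hs : s ≠ 0)
    (hΔ : Δ = (c * s - E) * D) :
    Δ / E ^ 2 * (-D * s / E)⁻¹ = s⁻¹ - c / E := by
  rw [inv_div, hΔ]
  field_simp
  ring

theorem mobius_pullback_coeff (hD : D ≠ 0) (hE : E ≠ 0) (hs : s ≠ 0)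
    (hΔ : Δ = (c * s - E) * D) {k : ℕ} (hk : 1 ≤ k) :
    Δ / E ^ 2 * ((-D * s / E) ^ (k + 1))⁻¹
      = ∑ p ∈ Icc 1 k, (s ^ (p + 1))⁻¹
          * ((k - 1).choose (p - 1) * (-c) ^ (k - p) * Δ ^ p / D ^ (p + k)) := by
  obtain ⟨j, rfl⟩ : ∃ j, k = j + 1 := ⟨k - 1, by omega⟩
  have hterm : ∀ q ∈ range (j + 1),
      (s ^ (1 + q + 1))⁻¹ * ((j + 1 - 1).choose (1 + q - 1) * (-c) ^ (j + 1 - (1 + q))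
          * Δ ^ (1 + q) / D ^ (1 + q + (j + 1)))
        = Δ / (D * s) ^ (j + 2) * ((c * s - E) ^ q * (-(c * s)) ^ (j - q) * j.choose q) := by
    intro q hq
    obtain ⟨r, rfl⟩ : ∃ r, j = q + r := ⟨j - q, by have := mem_range.mp hq; omega⟩
    simp only [show q + r + 1 - (1 + q) = r by omega, show q + r - q = r by omega,
      show 1 + q - 1 = q by omega, Nat.add_sub_cancel, hΔ, mul_pow]
    field_simp
    ring
  rw [show Icc 1 (j + 1) = Ico 1 (j + 1 + 1) from rfl, sum_Ico_eq_sum_range,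
    Nat.add_sub_cancel, sum_congr rfl hterm, ← mul_sum, ← add_pow,
    show c * s - E + -(c * s) = -E by ring, show -D * s / E = D * s / -E by ring,
    ← inv_pow, inv_div, div_pow,
    show (-E) ^ (j + 1 + 1) = E ^ 2 * (-E) ^ j by ring]
  field_simp

end

theorem mobius_det_eq_mul {K : Type*} [Field K] {a b c d z : K} (hz : c * z + d ≠ 0) (w : K) :
    a * d - b * c = (c * (w - (a * z + b) / (c * z + d)) - (c * w - a)) * (c * z + d) := by
  field_simp
  ring

theorem mobius_symm_sub {K : Type*} [Field K] {a b c d z w : K} (hz : c * z + d ≠ 0)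
    (hw : c * w - a ≠ 0) :
    -((d * w - b) / (c * w - a)) - z
      = -(c * z + d) * (w - (a * z + b) / (c * z + d)) / (c * w - a) := by
  rw [eq_div_iff hw, sub_mul, neg_mul, div_mul_cancel₀ _ hw, neg_mul, mul_sub (c * z + d),
    mul_div_cancel₀ _ hz]
  ring

theorem lax_residues_transform {V : Type*} [AddCommGroup V] [Module ℂ V] (N : ℕ) {J Jt : ℕ → V}
    {D E s c Δ u : ℂ} (hD : D ≠ 0) (hE : E ≠ 0) (hs : s ≠ 0) (hΔ : Δ = (c * s - E) * D)
    (hu : u = -D * s / E) (hJt0 : Jt 0 = J 0)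
    (hJtp : ∀ p ∈ Icc 1 N, Jt p = ∑ k ∈ Icc p N,
      ((k - 1).choose (p - 1) * (-c) ^ (k - p) * Δ ^ p / D ^ (p + k) : ℂ) • J k) :
    (Δ / E ^ 2) • ∑ p ∈ range (N + 1), (u ^ (p + 1))⁻¹ • J p
      = ∑ p ∈ range (N + 1), (s ^ (p + 1))⁻¹ • Jt p - (c / E) • J 0 := by
  rw [smul_sum, sum_range_eq_add_Ico _ N.succ_pos, sum_range_eq_add_Ico _ N.succ_pos,
    ← show Icc 1 N = Ico 1 (N + 1) from rfl]
  simp only [smul_smul, zero_add, pow_one]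
  rw [hu, mobius_pullback_coeff_zero hD hE hs hΔ, sub_smul, hJt0,
    sum_Icc_smul_eq_sum_Icc_smul_of_triangular
      (fun k hk => mobius_pullback_coeff hD hE hs hΔ (mem_Icc.1 hk).1) hJtp]
  abel

theorem statement5_general (V : Type*) [AddCommGroup V] [Module ℂ V]
    (n : ℕ) (z : Fin n → ℂ) (m : Fin n → ℕ) (hm : ∀ α, 1 ≤ m α)
    (J : Fin n → ℕ → V) (a b c d : ℝ)
    (hfin : ∀ α, (c : ℂ) * z α + d ≠ 0)
    (zt : Fin n → ℂ)
    (hzt : ∀ α, zt α = ((a : ℂ) * z α + b) / ((c : ℂ) * z α + d))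
    (Jt : Fin n → ℕ → V)
    (hJt0 : ∀ α, Jt α 0 = J α 0)
    (hJtp : ∀ α p, 1 ≤ p → p ≤ m α - 1 →
      Jt α p = ∑ k ∈ Finset.Icc p (m α - 1),
        ((Nat.choose (k - 1) (p - 1) : ℂ) * (-(c : ℂ)) ^ (k - p) * ((a : ℂ) * d - b * c) ^ p
          / ((c : ℂ) * z α + d) ^ (p + k)) • J α k)
    (w : ℂ) (hw1 : (c : ℂ) * w - a ≠ 0) (hw2 : ∀ α, w ≠ zt α) :
    (((a : ℂ) * d - b * c) / ((c : ℂ) * w - a) ^ 2) •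
        (∑ α, ∑ p ∈ Finset.range (m α),
          ((-(((d : ℂ) * w - b) / ((c : ℂ) * w - a)) - z α) ^ (p + 1))⁻¹ • J α p)
      = (∑ α, ∑ p ∈ Finset.range (m α), ((w - zt α) ^ (p + 1))⁻¹ • Jt α p)
        - ((c : ℂ) / ((c : ℂ) * w - a)) • (∑ α, J α 0) := by
  rw [smul_sum, smul_sum, ← sum_sub_distrib]
  refine sum_congr rfl fun α _ => ?_
  obtain ⟨N, hN⟩ : ∃ N, m α = N + 1 := ⟨m α - 1, by have := hm α; omega⟩
  have hN' : m α - 1 = N := by omega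
  rw [hN]
  refine lax_residues_transform N (hfin α) hw1 (sub_ne_zero.mpr (hw2 α))
    (hzt α ▸ mobius_det_eq_mul (hfin α) w) (hzt α ▸ mobius_symm_sub (hfin α) hw1) (hJt0 α)
    fun p hp => ?_
  rw [← hN']
  exact hJtp α p (mem_Icc.1 hp).1 (hN' ▸ (mem_Icc.1 hp).2)

/-- The Gaudin Lax matrix transforms as a 1-form under the change of spectral parameter
`z̃ = f(z) = (az+b)/(cz+d)`, up to a term proportional to the constraint `𝒞 = ∑_α J^α_0`:
`((ad-bc)/(cz̃-a)²) • Γ(f⁻¹(z̃)) = Γ̃(z̃) - (c/(cz̃-a)) • 𝒞`. -/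
theorem statement5 (V : Type*) [AddCommGroup V] [Module ℂ V]
    (n : ℕ) (z : Fin n → ℂ) (m : Fin n → ℕ) (hm : ∀ α, 1 ≤ m α)
    (J : Fin n → ℕ → V) (a b c d : ℝ)
    (hdet : (a : ℂ) * d - b * c ≠ 0)
    (hfin : ∀ α, (c : ℂ) * z α + d ≠ 0)
    (zt : Fin n → ℂ)
    (hzt : ∀ α, zt α = ((a : ℂ) * z α + b) / ((c : ℂ) * z α + d))
    (Jt : Fin n → ℕ → V)
    (hJt0 : ∀ α, Jt α 0 = J α 0)
    (hJtp : ∀ α p, 1 ≤ p → p ≤ m α - 1 →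
      Jt α p = ∑ k ∈ Finset.Icc p (m α - 1),
        ((Nat.choose (k - 1) (p - 1) : ℂ) * (-(c : ℂ)) ^ (k - p) * ((a : ℂ) * d - b * c) ^ p
          / ((c : ℂ) * z α + d) ^ (p + k)) • J α k)
    (w : ℂ) (hw1 : (c : ℂ) * w - a ≠ 0) (hw2 : ∀ α, w ≠ zt α) :
    (((a : ℂ) * d - b * c) / ((c : ℂ) * w - a) ^ 2) •
        (∑ α, ∑ p ∈ Finset.range (m α),
          ((-(((d : ℂ) * w - b) / ((c : ℂ) * w - a)) - z α) ^ (p + 1))⁻¹ • J α p)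
      = (∑ α, ∑ p ∈ Finset.range (m α), ((w - zt α) ^ (p + 1))⁻¹ • Jt α p)
        - ((c : ℂ) / ((c : ℂ) * w - a)) • (∑ α, J α 0) :=
  statement5_general V n z m hm J a b c d hfin zt hzt Jt hJt0 hJtp w hw1 hw2
end

section
/- For every z ∈ ℂ with z ≠ z_r for all r ∈ {1,…,N}, one has −ℓ^∞·φ_+(z)·φ_−(z) = Σ_{r=1}^{N} ( ℓ^r/(z−z_r)² − 2κ^r/(z−z_r) ) − ℓ^∞, where ℓ^r = −ℓ^∞·φ^r_+(z_r)·φ^r_−(z_r) and κ^r = (ℓ^∞/2)·( φ^r_+(z_r)·(φ^r_−)'(z_r) + (φ^r_+)'(z_r)·φ^r_−(z_r) ). That is, the partial fraction decomposition of the factorised twist function φ = −ℓ^∞ φ_+ φ_− has double-pole coefficients ℓ^r, residues −2κ^r at each z_r, and constant term −ℓ^∞. -/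
/-!
Since `∏ (w - ζ_i)` and `∏ (w - z_r)` are monic of the same degree, their difference has degree
`< N` and is recovered by Lagrange interpolation at the nodes `z_r`; this gives
`φ_±(u) = 1 + ∑_r φ^r_±(z_r) / (u - z_r)`. Consequently, near `z_r`,
`φ^r_±(w) = φ^r_±(z_r) + (w - z_r) (1 + ∑_{s ≠ r} φ^s_±(z_s) / (w - z_s))`, so
`(φ^r_±)'(z_r) = 1 + ∑_{s ≠ r} φ^s_±(z_s) / (z_r - z_s)`. Multiplying the two expansions and
splitting each cross term with `1/((u - z_r)(u - z_s)) = (1/(u - z_r) - 1/(u - z_s))/(z_r - z_s)`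
produces exactly the double poles `ℓ^r` and the residues `-2κ^r`.
-/

/-- The factorised twist function `φ_±(w) = ∏_i (w - ζ^±_i) / ∏_r (w - z_r)`. -/
noncomputable def phiFull (N : ℕ) (z ζ : Fin N → ℂ) (w : ℂ) : ℂ :=
  (∏ i, (w - ζ i)) / ∏ r, (w - z r)

/-- The function `φ^r_±(w) = (w - z_r) φ_±(w)`, with the pole at `z_r` removed so that it
is defined (and differentiable) at `w = z_r`. -/
noncomputable def phiReg (N : ℕ) (z ζ : Fin N → ℂ) (r : Fin N) (w : ℂ) : ℂ :=
  (∏ i, (w - ζ i)) / ∏ s ∈ Finset.univ.erase r, (w - z s)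

open Finset Polynomial Lagrange Filter Topology

theorem Lagrange.eval_div_eval_nodal {F ι : Type*} [Field F] [DecidableEq ι] {s : Finset ι}
    {v : ι → F} (hvs : Set.InjOn v s) {f : F[X]} (hf : f.Monic) (hdeg : f.degree = #s)
    {x : F} (hx : ∀ i ∈ s, x ≠ v i) :
    f.eval x / (nodal s v).eval x = 1 + ∑ i ∈ s, nodalWeight s v i * f.eval (v i) / (x - v i) := by
  have hlt : (f - nodal s v).degree < #s := by
    rw [← hdeg]
    exact degree_sub_lt_left (hdeg.trans degree_nodal.symm) hf.ne_zero
      (by rw [hf.leadingCoeff, nodal_monic.leadingCoeff])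
  have hinterp := congrArg (eval x) (eq_interpolate hvs hlt)
  rw [eval_interpolate_not_at_node _ hx, eval_sub] at hinterp
  have hne : (nodal s v).eval x ≠ 0 := by
    rw [eval_nodal]; exact prod_ne_zero_iff.2 fun i hi => sub_ne_zero.2 (hx i hi)
  rw [div_eq_iff hne, add_mul, one_mul, ← sub_eq_iff_eq_add', hinterp, mul_comm]
  congr 1
  refine sum_congr rfl fun i hi => ?_
  rw [eval_sub, eval_nodal_at_node hi, sub_zero]
  ring

theorem sum_div_sub_mul_sum_div_sub {K ι : Type*} [Field K] [Fintype ι] [DecidableEq ι]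
    {z : ι → K} (hz : Function.Injective z) (a b : ι → K) {u : K} (hu : ∀ r, u ≠ z r) :
    (∑ r, a r / (u - z r)) * ∑ r, b r / (u - z r) =
      ∑ r, (a r * b r / (u - z r) ^ 2 +
        (a r * ∑ s ∈ univ.erase r, b s / (z r - z s) +
          b r * ∑ s ∈ univ.erase r, a s / (z r - z s)) / (u - z r)) := by
  have hpf : ∀ r, ∀ s ∈ univ.erase r, a r / (u - z r) * (b s / (u - z s)) =
      a r * b s / (z r - z s) / (u - z r) + a r * b s / (z s - z r) / (u - z s) := by
    intro r s hs
    have hrs : z r - z s ≠ 0 := sub_ne_zero.2 (hz.ne (ne_of_mem_erase hs).symm)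
    have hsr : z s - z r ≠ 0 := sub_ne_zero.2 (hz.ne (ne_of_mem_erase hs))
    have hur : u - z r ≠ 0 := sub_ne_zero.2 (hu r)
    have hus : u - z s ≠ 0 := sub_ne_zero.2 (hu s)
    field_simp
    ring
  have hswap : ∑ r, ∑ s ∈ univ.erase r, a r * b s / (z s - z r) / (u - z s) =
      ∑ r, ∑ s ∈ univ.erase r, a s * b r / (z r - z s) / (u - z r) :=
    sum_comm' fun r s => by simp only [mem_erase, mem_univ, and_true, true_and, ne_comm]
  calc (∑ r, a r / (u - z r)) * ∑ r, b r / (u - z r)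
      = ∑ r, (a r * b r / (u - z r) ^ 2 +
          ∑ s ∈ univ.erase r, a r / (u - z r) * (b s / (u - z s))) := by
        rw [sum_mul_sum]
        refine sum_congr rfl fun r _ => ?_
        rw [← add_sum_erase _ _ (mem_univ r), div_mul_div_comm, ← sq]
    _ = ∑ r, (a r * b r / (u - z r) ^ 2 +
          ∑ s ∈ univ.erase r, a r * b s / (z r - z s) / (u - z r)) +
        ∑ r, ∑ s ∈ univ.erase r, a r * b s / (z s - z r) / (u - z s) := by
        rw [← sum_add_distrib]
        refine sum_congr rfl fun r _ => ?_
        rw [sum_congr rfl (hpf r), sum_add_distrib, add_assoc]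
    _ = _ := by
        rw [hswap, ← sum_add_distrib]
        refine sum_congr rfl fun r _ => ?_
        rw [add_assoc, ← sum_add_distrib, mul_sum, mul_sum, ← sum_add_distrib, sum_div]
        exact congrArg _ (sum_congr rfl fun s _ => by ring)

section Twist

variable {N : ℕ} {z : Fin N → ℂ}

theorem phiFull_eq_one_add_sum (hz : Function.Injective z) (ζ : Fin N → ℂ) {u : ℂ}
    (hu : ∀ r, u ≠ z r) :
    phiFull N z ζ u = 1 + ∑ r, phiReg N z ζ r (z r) / (u - z r) := by
  have h := eval_div_eval_nodal hz.injOn (nodal_monic (s := univ) (v := ζ))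
    (by rw [degree_nodal, card_univ]) fun r _ => hu r
  simp only [eval_nodal, nodalWeight, prod_inv_distrib] at h
  rw [phiFull, h]
  congr 1
  exact sum_congr rfl fun r _ => by rw [phiReg, inv_mul_eq_div]

theorem phiReg_eq_mul_phiFull (ζ : Fin N → ℂ) {r : Fin N} {w : ℂ} (hw : w ≠ z r) :
    phiReg N z ζ r w = (w - z r) * phiFull N z ζ w := by
  rw [phiFull, phiReg, ← mul_prod_erase univ (fun s => w - z s) (mem_univ r), ← mul_div_assoc,
    mul_div_mul_left _ _ (sub_ne_zero.2 hw)]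

theorem phiReg_eq_add_mul (hz : Function.Injective z) (ζ : Fin N → ℂ) {r : Fin N} {w : ℂ}
    (hw : ∀ s ∈ univ.erase r, w ≠ z s) :
    phiReg N z ζ r w = phiReg N z ζ r (z r) +
      (w - z r) * (1 + ∑ s ∈ univ.erase r, phiReg N z ζ s (z s) / (w - z s)) := by
  rcases eq_or_ne w (z r) with rfl | hwr
  · ring
  have hu : ∀ s, w ≠ z s := fun s => by
    rcases eq_or_ne s r with rfl | hsr
    exacts [hwr, hw s (mem_erase.2 ⟨hsr, mem_univ s⟩)]
  rw [phiReg_eq_mul_phiFull ζ hwr, phiFull_eq_one_add_sum hz ζ hu,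
    ← add_sum_erase _ _ (mem_univ r)]
  field_simp [sub_ne_zero.2 hwr]
  ring

theorem deriv_phiReg_self (hz : Function.Injective z) (ζ : Fin N → ℂ) (r : Fin N) :
    deriv (phiReg N z ζ r) (z r) =
      1 + ∑ s ∈ univ.erase r, phiReg N z ζ s (z s) / (z r - z s) := by
  set g : ℂ → ℂ := fun w => 1 + ∑ s ∈ univ.erase r, phiReg N z ζ s (z s) / (w - z s)
  have hne : ∀ s ∈ univ.erase r, z r ≠ z s := fun s hs => hz.ne (ne_of_mem_erase hs).symm
  have hev : phiReg N z ζ r =ᶠ[𝓝 (z r)] fun w => phiReg N z ζ r (z r) + (w - z r) * g w :=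
    ((eventually_all_finset _).2 fun s hs => eventually_ne_nhds (hne s hs)).mono
      fun w hw => phiReg_eq_add_mul hz ζ hw
  have hg : DifferentiableAt ℂ g (z r) := by
    fun_prop (disch := exact sub_ne_zero.2 (hne _ ‹_›))
  have hderiv := (((hasDerivAt_id' (z r)).sub_const (z r)).fun_mul hg.hasDerivAt).const_add
    (phiReg N z ζ r (z r))
  rw [hev.deriv_eq, hderiv.deriv]
  simp [g]

end Twist

theorem statement6_general (N : ℕ) (z : Fin N → ℂ) (hz : Function.Injective z)
    (ζp ζm : Fin N → ℂ)
    (linf : ℂ)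
    (ℓ : Fin N → ℂ)
    (hℓ : ∀ r, ℓ r = -linf * phiReg N z ζp r (z r) * phiReg N z ζm r (z r))
    (κ : Fin N → ℂ)
    (hκ : ∀ r, κ r = linf / 2 *
      (phiReg N z ζp r (z r) * deriv (phiReg N z ζm r) (z r)
        + deriv (phiReg N z ζp r) (z r) * phiReg N z ζm r (z r)))
    (u : ℂ) (hu : ∀ r, u ≠ z r) :
    -linf * phiFull N z ζp u * phiFull N z ζm u
      = (∑ r, (ℓ r / (u - z r) ^ 2 - 2 * κ r / (u - z r))) - linf := by
  set a := fun r => phiReg N z ζp r (z r)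
  set b := fun r => phiReg N z ζm r (z r)
  have hterm : ∀ r, ℓ r / (u - z r) ^ 2 - 2 * κ r / (u - z r) =
      -linf * ((a r * b r / (u - z r) ^ 2 +
        (a r * ∑ s ∈ univ.erase r, b s / (z r - z s) +
          b r * ∑ s ∈ univ.erase r, a s / (z r - z s)) / (u - z r)) +
        a r / (u - z r) + b r / (u - z r)) := fun r => by
    rw [hℓ, hκ, deriv_phiReg_self hz, deriv_phiReg_self hz]
    ring
  rw [phiFull_eq_one_add_sum hz ζp hu, phiFull_eq_one_add_sum hz ζm hu,
    sum_congr rfl fun r _ => hterm r, ← mul_sum, sum_add_distrib, sum_add_distrib,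
    ← sum_div_sub_mul_sum_div_sub hz a b hu]
  ring

/-- Partial fraction decomposition of the factorised twist function
`φ = -ℓ^∞ φ_+ φ_-`: it has double-pole coefficients `ℓ^r = -ℓ^∞ φ^r_+(z_r) φ^r_-(z_r)`,
residues `-2κ^r` at each `z_r` with
`κ^r = (ℓ^∞/2)(φ^r_+(z_r) (φ^r_-)'(z_r) + (φ^r_+)'(z_r) φ^r_-(z_r))`,
and constant term `-ℓ^∞`. -/
theorem statement6 (N : ℕ) (hN : 1 ≤ N) (z : Fin N → ℂ) (hz : Function.Injective z)
    (ζp ζm : Fin N → ℂ) (hζp : ∀ i r, ζp i ≠ z r) (hζm : ∀ i r, ζm i ≠ z r)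
    (linf : ℂ)
    (ℓ : Fin N → ℂ)
    (hℓ : ∀ r, ℓ r = -linf * phiReg N z ζp r (z r) * phiReg N z ζm r (z r))
    (κ : Fin N → ℂ)
    (hκ : ∀ r, κ r = linf / 2 *
      (phiReg N z ζp r (z r) * deriv (phiReg N z ζm r) (z r)
        + deriv (phiReg N z ζp r) (z r) * phiReg N z ζm r (z r)))
    (u : ℂ) (hu : ∀ r, u ≠ z r) :
    -linf * phiFull N z ζp u * phiFull N z ζm u
      = (∑ r, (ℓ r / (u - z r) ^ 2 - 2 * κ r / (u - z r))) - linf :=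
  statement6_general N z hz ζp ζm linf ℓ hℓ κ hκ u hu
end

section
/- For every z ∈ ℂ with z ≠ w_r for all r ∈ {1,…,M}, one has −λ·ψ_+(z)·ψ_−(z) = Σ_{r=1}^{M} ( ℓ̃_r/(z−w_r)² − 2κ_r/(z−w_r) ), where ℓ̃_r = −λ·ψ^r_+(w_r)·ψ^r_−(w_r). That is, the partial fraction decomposition of the factorised twist function of the gauged model, whose 1-form is regular at infinity, has double-pole coefficients ℓ̃_r and residues −2κ_r at each w_r and no constant term. -/
/-- The factorised gauged twist function `ψ_±(v) = ∏_{i<M-1} (v - η^±_i) / ∏_{r<M} (v - w_r)`. -/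
noncomputable def psiFull (M : ℕ) (w : Fin M → ℂ) (η : Fin (M - 1) → ℂ) (v : ℂ) : ℂ :=
  (∏ i, (v - η i)) / ∏ r, (v - w r)

/-- The function `ψ^r_±(v) = (v - w_r) ψ_±(v)`, with the pole at `w_r` removed so that it
is defined (and differentiable) at `v = w_r`. -/
noncomputable def psiReg (M : ℕ) (w : Fin M → ℂ) (η : Fin (M - 1) → ℂ) (r : Fin M)
    (v : ℂ) : ℂ :=
  (∏ i, (v - η i)) / ∏ s ∈ Finset.univ.erase r, (v - w s)

/-!
Write `-λ ψ₊ ψ₋ = P / D²` with `D = ∏ (z - w_r)` and `P = -λ N₊ N₋`, so `deg P ≤ 2M - 2 < deg D²`.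
A polynomial of degree `< 2M` is determined by its values and first derivatives at the `M`
distinct nodes `w_r`, since the difference of two candidates is divisible by `D²`. The polynomial
`∑ (ℓ̃_r - 2κ_r (X - w_r)) E_r²`, where `E_r = D / (X - w_r)`, has degree `< 2M` and the same data
as `P`: `ℓ̃_r` and `-2κ_r` are the value and the derivative at `w_r` of `P / E_r² = -λ ψ^r₊ ψ^r₋`.
Hence the two agree, and dividing by `D²` gives the expansion, without constant term.
-/

open Polynomial Lagrange Finset

section Hermite

variable {K ι : Type*} [Field K] {s : Finset ι} {v : ι → K}

theorem sq_nodal_dvd_of_isRoot_of_isRoot_derivative (hv : Set.InjOn v s) {R : K[X]}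
    (h0 : ∀ i ∈ s, R.IsRoot (v i)) (h1 : ∀ i ∈ s, R.derivative.IsRoot (v i)) :
    nodal s v ^ 2 ∣ R := by
  rcases eq_or_ne R 0 with rfl | hR
  · exact dvd_zero _
  rw [nodal_eq, ← prod_pow]
  refine prod_dvd_of_coprime (fun i hi j hj hij => ?_) fun i hi => ?_
  · exact (isCoprime_X_sub_C_of_isUnit_sub (sub_ne_zero.2 (hv.ne hi hj hij)).isUnit).pow
  · exact (le_rootMultiplicity_iff hR).1
      ((one_lt_rootMultiplicity_iff_isRoot hR).2 ⟨h0 i hi, h1 i hi⟩)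

theorem eq_zero_of_isRoot_of_isRoot_derivative (hv : Set.InjOn v s) {R : K[X]}
    (hdeg : R.natDegree < 2 * #s) (h0 : ∀ i ∈ s, R.IsRoot (v i))
    (h1 : ∀ i ∈ s, R.derivative.IsRoot (v i)) : R = 0 :=
  eq_zero_of_dvd_of_natDegree_lt (sq_nodal_dvd_of_isRoot_of_isRoot_derivative hv h0 h1)
    (by rw [natDegree_pow, natDegree_nodal]; omega)

variable [DecidableEq ι]

variable (s v) in
noncomputable def hermiteSum (a b : ι → K) : K[X] :=
  ∑ i ∈ s, (C (a i) + C (b i) * (X - C (v i))) * nodal (s.erase i) v ^ 2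

theorem natDegree_hermiteSum_lt (a b : ι → K) (hs : s.Nonempty) :
    (hermiteSum s v a b).natDegree < 2 * #s := by
  have hcard := hs.card_pos
  refine lt_of_le_of_lt (natDegree_sum_le_of_forall_le _ _ (n := 2 * #s - 1) fun i hi => ?_)
    (by omega)
  refine natDegree_mul_le.trans ?_
  have hlin : (C (a i) + C (b i) * (X - C (v i))).natDegree ≤ 1 :=
    natDegree_add_le_of_degree_le (by simp) (natDegree_C_mul_le _ _ |>.trans (by simp))
  rw [natDegree_pow, natDegree_nodal, card_erase_of_mem hi]
  omega

theorem eval_hermiteSum_of_mem (a b : ι → K) {j : ι} (hj : j ∈ s) :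
    (hermiteSum s v a b).eval (v j) = a j * (nodal (s.erase j) v).eval (v j) ^ 2 := by
  rw [hermiteSum, eval_finsetSum, sum_eq_single_of_mem j hj]
  · simp
  · intro i _ hij
    simp [eval_nodal_at_node (mem_erase.2 ⟨Ne.symm hij, hj⟩)]

theorem derivative_eval_hermiteSum_of_mem (a b : ι → K) {j : ι} (hj : j ∈ s) :
    (hermiteSum s v a b).derivative.eval (v j) =
      b j * (nodal (s.erase j) v).eval (v j) ^ 2 +
        2 * a j * (nodal (s.erase j) v).eval (v j) *
          (nodal (s.erase j) v).derivative.eval (v j) := by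
  rw [hermiteSum, derivative_sum, eval_finsetSum, sum_eq_single_of_mem j hj]
  · simp only [derivative_mul, derivative_add, derivative_C, zero_mul, derivative_sub,
      derivative_X, sub_zero, mul_one, zero_add, derivative_pow, Nat.cast_ofNat,
      Nat.add_one_sub_one, pow_one, eval_add, eval_mul, eval_C, eval_pow, eval_sub, eval_X,
      sub_self, mul_zero, add_zero, add_right_inj]
    ring
  · intro i _ hij
    simp [derivative_mul, derivative_pow, eval_nodal_at_node (mem_erase.2 ⟨Ne.symm hij, hj⟩)]

theorem eq_hermiteSum (hv : Set.InjOn v s) {P : K[X]} (hdeg : P.natDegree < 2 * #s)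
    {a b : ι → K} (ha : ∀ i ∈ s, P.eval (v i) = a i * (nodal (s.erase i) v).eval (v i) ^ 2)
    (hb : ∀ i ∈ s, P.derivative.eval (v i) = b i * (nodal (s.erase i) v).eval (v i) ^ 2 +
        2 * a i * (nodal (s.erase i) v).eval (v i) * (nodal (s.erase i) v).derivative.eval (v i)) :
    P = hermiteSum s v a b := by
  rcases s.eq_empty_or_nonempty with rfl | hs
  · simp at hdeg
  refine sub_eq_zero.1
    (eq_zero_of_isRoot_of_isRoot_derivative hv ?_ (fun i hi => ?_) fun i hi => ?_)
  · exact (natDegree_sub_le _ _).trans_lt (max_lt hdeg (natDegree_hermiteSum_lt a b hs))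
  · simp [IsRoot, ha i hi, eval_hermiteSum_of_mem a b hi]
  · simp [IsRoot, hb i hi, derivative_eval_hermiteSum_of_mem a b hi]

end Hermite

section PartialFractions

variable {𝕜 : Type*} [NontriviallyNormedField 𝕜]

theorem derivative_eval_eq_deriv_div_sq {P E : 𝕜[X]} {x : 𝕜} (hE : E.eval x ≠ 0) :
    P.derivative.eval x = deriv (fun z => P.eval z / E.eval z ^ 2) x * E.eval x ^ 2 +
      2 * (P.eval x / E.eval x ^ 2) * E.eval x * E.derivative.eval x := by
  have hquot : HasDerivAt (fun z => P.eval z / E.eval z ^ 2) _ x :=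
    (P.hasDerivAt x).div ((E.hasDerivAt x).pow 2) (pow_ne_zero 2 hE)
  rw [hquot.deriv]
  field_simp
  ring

variable {ι : Type*} [DecidableEq ι] {s : Finset ι} {v : ι → 𝕜}

theorem eval_div_nodal_sq_eq_sum (hv : Set.InjOn v s) {P : 𝕜[X]} (hdeg : P.natDegree < 2 * #s)
    {g : ι → 𝕜 → 𝕜} (hg : ∀ i ∈ s, g i = fun z => P.eval z / (nodal (s.erase i) v).eval z ^ 2)
    {u : 𝕜} (hu : ∀ i ∈ s, u ≠ v i) :
    P.eval u / (nodal s v).eval u ^ 2 =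
      ∑ i ∈ s, (g i (v i) / (u - v i) ^ 2 + deriv (g i) (v i) / (u - v i)) := by
  have hE : ∀ i ∈ s, (nodal (s.erase i) v).eval (v i) ≠ 0 := fun i hi =>
    eval_nodal_not_at_node fun j hj => hv.ne hi (mem_of_mem_erase hj) (ne_of_mem_erase hj).symm
  rw [eq_hermiteSum hv hdeg (a := fun i => g i (v i)) (b := fun i => deriv (g i) (v i))
    (fun i hi => by rw [hg i hi, div_mul_cancel₀ _ (pow_ne_zero 2 (hE i hi))])
    (fun i hi => by rw [hg i hi]; exact derivative_eval_eq_deriv_div_sq (hE i hi)),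
    hermiteSum, eval_finsetSum, sum_div]
  refine sum_congr rfl fun i hi => ?_
  have hu_sub : u - v i ≠ 0 := sub_ne_zero.2 (hu i hi)
  have hE_u : (nodal (s.erase i) v).eval u ≠ 0 :=
    eval_nodal_not_at_node fun j hj => hu j (mem_of_mem_erase hj)
  rw [nodal_eq_mul_nodal_erase hi]
  simp only [eval_mul, eval_add, eval_pow, eval_C, eval_sub, eval_X]
  field_simp

end PartialFractions

section TwistFunction

variable {M : ℕ} {w : Fin M → ℂ}

theorem psiFull_eq_eval_div (η : Fin (M - 1) → ℂ) (v : ℂ) :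
    psiFull M w η v = (nodal univ η).eval v / (nodal univ w).eval v := by
  simp only [psiFull, eval_nodal]

theorem psiReg_eq_eval_div (η : Fin (M - 1) → ℂ) (r : Fin M) :
    psiReg M w η r = fun v => (nodal univ η).eval v / (nodal (univ.erase r) w).eval v := by
  funext v
  simp only [psiReg, eval_nodal]

theorem differentiableAt_psiReg (hw : Function.Injective w) (η : Fin (M - 1) → ℂ) (r : Fin M) :
    DifferentiableAt ℂ (psiReg M w η r) (w r) := by
  rw [psiReg_eq_eval_div]
  exact (nodal univ η).differentiableAt.div (nodal (univ.erase r) w).differentiableAt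
    (eval_nodal_not_at_node fun s hs => hw.ne (ne_of_mem_erase hs).symm)

end TwistFunction

theorem statement7_general (M : ℕ) (hM : 1 ≤ M) (w : Fin M → ℂ) (hw : Function.Injective w)
    (ηp ηm : Fin (M - 1) → ℂ)
    (lam : ℂ)
    (ℓt : Fin M → ℂ)
    (hℓt : ∀ r, ℓt r = -lam * psiReg M w ηp r (w r) * psiReg M w ηm r (w r))
    (κ : Fin M → ℂ)
    (hκ : ∀ r, κ r = lam / 2 *
      (psiReg M w ηp r (w r) * deriv (psiReg M w ηm r) (w r)
        + deriv (psiReg M w ηp r) (w r) * psiReg M w ηm r (w r)))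
    (u : ℂ) (hu : ∀ r, u ≠ w r) :
    -lam * psiFull M w ηp u * psiFull M w ηm u
      = ∑ r, (ℓt r / (u - w r) ^ 2 - 2 * κ r / (u - w r)) := by
  set P : ℂ[X] := C (-lam) * (nodal univ ηp * nodal univ ηm) with hP
  have hdeg : P.natDegree < 2 * #(univ : Finset (Fin M)) := by
    rw [hP]
    have := (natDegree_C_mul_le (-lam) _).trans
      (natDegree_mul_le (p := nodal univ ηp) (q := nodal univ ηm))
    simp only [natDegree_nodal, card_univ, Fintype.card_fin] at this ⊢
    omega
  set g : Fin M → ℂ → ℂ := fun r z => -lam * psiReg M w ηp r z * psiReg M w ηm r z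
  have hg : ∀ r ∈ univ, g r = fun z => P.eval z / (nodal (univ.erase r) w).eval z ^ 2 := by
    intro r _
    funext z
    simp only [g, hP, psiReg_eq_eval_div, eval_mul, eval_C]
    ring
  have hderiv : ∀ r, deriv (g r) (w r) = -(2 * κ r) := by
    intro r
    have hprod : HasDerivAt (g r) _ (w r) :=
      ((differentiableAt_psiReg hw ηp r).hasDerivAt.const_mul (-lam)).mul
        (differentiableAt_psiReg hw ηm r).hasDerivAt
    rw [hprod.deriv, hκ r]
    ring
  have hlhs : -lam * psiFull M w ηp u * psiFull M w ηm u
      = P.eval u / (nodal univ w).eval u ^ 2 := by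
    simp only [psiFull_eq_eval_div, hP, eval_mul, eval_C]
    ring
  rw [hlhs, eval_div_nodal_sq_eq_sum hw.injOn hdeg hg fun r _ => hu r]
  refine sum_congr rfl fun r _ => ?_
  rw [hderiv r, hℓt r]
  ring

/-- Partial fraction decomposition of the factorised twist function `-λ ψ_+ ψ_-` of the
gauged model, whose 1-form is regular at infinity: it has double-pole coefficients
`ℓ̃_r = -λ ψ^r_+(w_r) ψ^r_-(w_r)` and residues `-2κ_r` at each `w_r`, and no constant term. -/
theorem statement7 (M : ℕ) (hM : 1 ≤ M) (w : Fin M → ℂ) (hw : Function.Injective w)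
    (ηp ηm : Fin (M - 1) → ℂ) (hηp : ∀ i r, ηp i ≠ w r) (hηm : ∀ i r, ηm i ≠ w r)
    (lam : ℂ)
    (ℓt : Fin M → ℂ)
    (hℓt : ∀ r, ℓt r = -lam * psiReg M w ηp r (w r) * psiReg M w ηm r (w r))
    (κ : Fin M → ℂ)
    (hκ : ∀ r, κ r = lam / 2 *
      (psiReg M w ηp r (w r) * deriv (psiReg M w ηm r) (w r)
        + deriv (psiReg M w ηp r) (w r) * psiReg M w ηm r (w r)))
    (u : ℂ) (hu : ∀ r, u ≠ w r) :
    -lam * psiFull M w ηp u * psiFull M w ηm u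
      = ∑ r, (ℓt r / (u - w r) ^ 2 - 2 * κ r / (u - w r)) :=
  statement7_general M hM w hw ηp ηm lam ℓt hℓt κ hκ u hu
end

section
/- For every z ∈ ℂ with c·z + d ≠ 0 and z ≠ z_r for all r ∈ {1,…,N}: (i) for each sign ±, φ̃_±(f(z)) = ( ω_± / (f(z) − a/c) ) · φ_±(z); and (ii) for each sign ± and each r ∈ {1,…,N}, φ̃^r_±(f(z)) = ( ω_± · c · (c·z̃_r − a) / (ad−bc) ) · φ^r_±(z), where φ̃^r_±(z̃) = (z̃ − z̃_r)·φ̃_±(z̃). -/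
/-- The factorised gauged twist function
`φ̃_±(z̃) = ∏_{i≤N} (z̃ - ζ̃^±_i) / ∏_{r≤N+1} (z̃ - z̃_r)`. -/
noncomputable def phiTFull (N : ℕ) (zt : Fin (N + 1) → ℂ) (ζt : Fin N → ℂ) (w : ℂ) : ℂ :=
  (∏ i, (w - ζt i)) / ∏ r, (w - zt r)

section Mobius

variable {K : Type*} [Field K] {a b c d : K} {f : K → K}

theorem mobius_sub_mobius (hf : ∀ v, f v = (a * v + b) / (c * v + d)) {u v : K}
    (hu : c * u + d ≠ 0) (hv : c * v + d ≠ 0) :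
    f u - f v = (a * d - b * c) * (u - v) / ((c * u + d) * (c * v + d)) := by
  have hu' : u * c + d ≠ 0 := by rwa [mul_comm]
  rw [hf, hf]
  field_simp
  ring

theorem mul_mobius_sub (hf : ∀ v, f v = (a * v + b) / (c * v + d)) {v : K}
    (hv : c * v + d ≠ 0) :
    c * f v - a = -(a * d - b * c) / (c * v + d) := by
  rw [hf]
  field_simp
  ring

theorem mobius_sub_div (hf : ∀ v, f v = (a * v + b) / (c * v + d)) (hc : c ≠ 0) {u : K}
    (hu : c * u + d ≠ 0) :
    f u - a / c = -(a * d - b * c) / (c * (c * u + d)) := by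
  have hu' : u * c + d ≠ 0 := by rwa [mul_comm]
  rw [hf]
  field_simp
  ring

theorem prod_mobius_sub {ι : Type*} [Fintype ι]
    (hf : ∀ v, f v = (a * v + b) / (c * v + d)) {u : K} (hu : c * u + d ≠ 0)
    (w : ι → K) (hw : ∀ i, c * w i + d ≠ 0) :
    ∏ i, (f u - f (w i)) = (a * d - b * c) ^ Fintype.card ι * (∏ i, (u - w i))
      / ((c * u + d) ^ Fintype.card ι * ∏ i, (c * w i + d)) := by
  rw [Finset.prod_congr rfl fun i _ => mobius_sub_mobius hf hu (hw i), Finset.prod_div_distrib,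
    Finset.prod_mul_distrib, Finset.prod_mul_distrib, Finset.prod_const, Finset.prod_const,
    Finset.card_univ]

end Mobius

section Twist

variable {N : ℕ} {z ζ : Fin N → ℂ} {a b c d : ℂ} {f : ℂ → ℂ} {zt : Fin (N + 1) → ℂ} {u : ℂ}

theorem phiTFull_mobius (hdet : a * d - b * c ≠ 0) (hc : c ≠ 0)
    (hzfin : ∀ r, c * z r + d ≠ 0) (hζfin : ∀ i, c * ζ i + d ≠ 0)
    (hf : ∀ v, f v = (a * v + b) / (c * v + d))
    (hzt : ∀ r : Fin N, zt r.castSucc = f (z r)) (hztlast : zt (Fin.last N) = a / c)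
    (hu : c * u + d ≠ 0) (huz : ∀ r, u ≠ z r) :
    phiTFull N zt (fun i => f (ζ i)) (f u)
      = (∏ r, (c * z r + d)) / (∏ i, (c * ζ i + d)) / (f u - a / c) * phiFull N z ζ u := by
  have hpole : f u - a / c ≠ 0 := by
    rw [mobius_sub_div hf hc hu]
    exact div_ne_zero (neg_ne_zero.mpr hdet) (mul_ne_zero hc hu)
  have hden : ∏ r : Fin N, (f u - zt r.castSucc) = ∏ r, (f u - f (z r)) := by
    simp only [hzt]
  have huz' : ∏ r, (u - z r) ≠ 0 := Finset.prod_ne_zero_iff.mpr fun r _ => sub_ne_zero.mpr (huz r)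
  have hz' : ∏ r, (c * z r + d) ≠ 0 := Finset.prod_ne_zero_iff.mpr fun r _ => hzfin r
  have hζ' : ∏ i, (c * ζ i + d) ≠ 0 := Finset.prod_ne_zero_iff.mpr fun i _ => hζfin i
  rw [phiTFull, phiFull, Fin.prod_univ_castSucc, hztlast, hden,
    prod_mobius_sub hf hu _ hζfin, prod_mobius_sub hf hu _ hzfin, Fintype.card_fin]
  field_simp

theorem sub_mul_phiTFull_mobius (hdet : a * d - b * c ≠ 0) (hc : c ≠ 0)
    (hzfin : ∀ r, c * z r + d ≠ 0) (hζfin : ∀ i, c * ζ i + d ≠ 0)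
    (hf : ∀ v, f v = (a * v + b) / (c * v + d))
    (hzt : ∀ r : Fin N, zt r.castSucc = f (z r)) (hztlast : zt (Fin.last N) = a / c)
    (hu : c * u + d ≠ 0) (huz : ∀ r, u ≠ z r) (r : Fin N) :
    (f u - zt r.castSucc) * phiTFull N zt (fun i => f (ζ i)) (f u)
      = (∏ r, (c * z r + d)) / (∏ i, (c * ζ i + d)) * c * (c * zt r.castSucc - a)
          / (a * d - b * c) * ((u - z r) * phiFull N z ζ u) := by
  have hzr := hzfin r
  rw [phiTFull_mobius hdet hc hzfin hζfin hf hzt hztlast hu huz, hzt,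
    mobius_sub_mobius hf hu hzr, mul_mobius_sub hf hzr, mobius_sub_div hf hc hu]
  field_simp

end Twist

theorem statement8_general (N : ℕ) (z : Fin N → ℂ)
    (ζp ζm : Fin N → ℂ)
    (a b c d : ℝ) (hdet : (a : ℂ) * d - b * c ≠ 0) (hc : (c : ℂ) ≠ 0)
    (hzfin : ∀ r, (c : ℂ) * z r + d ≠ 0)
    (hζpfin : ∀ i, (c : ℂ) * ζp i + d ≠ 0) (hζmfin : ∀ i, (c : ℂ) * ζm i + d ≠ 0)
    (f : ℂ → ℂ) (hf : ∀ v, f v = ((a : ℂ) * v + b) / ((c : ℂ) * v + d))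
    (zt : Fin (N + 1) → ℂ) (hzt : ∀ r : Fin N, zt r.castSucc = f (z r))
    (hztlast : zt (Fin.last N) = (a : ℂ) / c)
    (ωp ωm : ℂ)
    (hωp : ωp = (∏ r, ((c : ℂ) * z r + d)) / ∏ i, ((c : ℂ) * ζp i + d))
    (hωm : ωm = (∏ r, ((c : ℂ) * z r + d)) / ∏ i, ((c : ℂ) * ζm i + d))
    (u : ℂ) (hu1 : (c : ℂ) * u + d ≠ 0) (hu2 : ∀ r, u ≠ z r) :
    (phiTFull N zt (fun i => f (ζp i)) (f u)
        = ωp / (f u - (a : ℂ) / c) * phiFull N z ζp u ∧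
      phiTFull N zt (fun i => f (ζm i)) (f u)
        = ωm / (f u - (a : ℂ) / c) * phiFull N z ζm u) ∧
    ∀ r : Fin N,
      (f u - zt r.castSucc) * phiTFull N zt (fun i => f (ζp i)) (f u)
          = ωp * c * ((c : ℂ) * zt r.castSucc - a) / ((a : ℂ) * d - b * c)
            * ((u - z r) * phiFull N z ζp u) ∧
      (f u - zt r.castSucc) * phiTFull N zt (fun i => f (ζm i)) (f u)
          = ωm * c * ((c : ℂ) * zt r.castSucc - a) / ((a : ℂ) * d - b * c)
            * ((u - z r) * phiFull N z ζm u) := by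
  subst hωp hωm
  exact ⟨⟨phiTFull_mobius hdet hc hzfin hζpfin hf hzt hztlast hu1 hu2,
      phiTFull_mobius hdet hc hzfin hζmfin hf hzt hztlast hu1 hu2⟩,
    fun r => ⟨sub_mul_phiTFull_mobius hdet hc hzfin hζpfin hf hzt hztlast hu1 hu2 r,
      sub_mul_phiTFull_mobius hdet hc hzfin hζmfin hf hzt hztlast hu1 hu2 r⟩⟩

/-- Transformation relations of the factorised twist functions under the Möbius change of
spectral parameter `z̃ = f(z) = (az+b)/(cz+d)`:
(i) `φ̃_±(f(z)) = (ω_± / (f(z) - a/c)) φ_±(z)`, and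
(ii) `φ̃^r_±(f(z)) = (ω_± c (c z̃_r - a)/(ad-bc)) φ^r_±(z)` for `r ∈ {1,…,N}`,
where `φ^r_±(z) = (z - z_r) φ_±(z)` and `φ̃^r_±(z̃) = (z̃ - z̃_r) φ̃_±(z̃)`. -/
theorem statement8 (N : ℕ) (hN : 1 ≤ N) (z : Fin N → ℂ) (hz : Function.Injective z)
    (ζp ζm : Fin N → ℂ) (hζp : ∀ i r, ζp i ≠ z r) (hζm : ∀ i r, ζm i ≠ z r)
    (a b c d : ℝ) (hdet : (a : ℂ) * d - b * c ≠ 0) (hc : (c : ℂ) ≠ 0)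
    (hzfin : ∀ r, (c : ℂ) * z r + d ≠ 0)
    (hζpfin : ∀ i, (c : ℂ) * ζp i + d ≠ 0) (hζmfin : ∀ i, (c : ℂ) * ζm i + d ≠ 0)
    (f : ℂ → ℂ) (hf : ∀ v, f v = ((a : ℂ) * v + b) / ((c : ℂ) * v + d))
    (zt : Fin (N + 1) → ℂ) (hzt : ∀ r : Fin N, zt r.castSucc = f (z r))
    (hztlast : zt (Fin.last N) = (a : ℂ) / c)
    (ωp ωm : ℂ)
    (hωp : ωp = (∏ r, ((c : ℂ) * z r + d)) / ∏ i, ((c : ℂ) * ζp i + d))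
    (hωm : ωm = (∏ r, ((c : ℂ) * z r + d)) / ∏ i, ((c : ℂ) * ζm i + d))
    (u : ℂ) (hu1 : (c : ℂ) * u + d ≠ 0) (hu2 : ∀ r, u ≠ z r) :
    (phiTFull N zt (fun i => f (ζp i)) (f u)
        = ωp / (f u - (a : ℂ) / c) * phiFull N z ζp u ∧
      phiTFull N zt (fun i => f (ζm i)) (f u)
        = ωm / (f u - (a : ℂ) / c) * phiFull N z ζm u) ∧
    ∀ r : Fin N,
      (f u - zt r.castSucc) * phiTFull N zt (fun i => f (ζp i)) (f u)
          = ωp * c * ((c : ℂ) * zt r.castSucc - a) / ((a : ℂ) * d - b * c)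
            * ((u - z r) * phiFull N z ζp u) ∧
      (f u - zt r.castSucc) * phiTFull N zt (fun i => f (ζm i)) (f u)
          = ωm * c * ((c : ℂ) * zt r.castSucc - a) / ((a : ℂ) * d - b * c)
            * ((u - z r) * phiFull N z ζm u) :=
  statement8_general N z ζp ζm a b c d hdet hc hzfin hζpfin hζmfin f hf zt hzt hztlast ωp ωm hωp hωm
    u hu1 hu2
end

section
/- Define Θ_{+,r}(z) = (λ/2)·ψ^r_+(z)·ψ^r_−(w_r)/(z−w_r)² and Θ_{−,r}(z) = −(λ/2)·ψ^r_−(z)·ψ^r_+(w_r)/(z−w_r)². Then for all r ≠ s in {1,…,M}: the function z ↦ (z−w_s)·Θ_{+,r}(z) tends to ρ_{sr} as z tends to w_s within ℂ∖{w_s}, and the function z ↦ (z−w_s)·Θ_{−,r}(z) tends to ρ_{rs} as z tends to w_s within ℂ∖{w_s}. That is, the residue of the 1-form Θ_{+,r}(z)dz at z = w_s equals ρ_{sr}, and the residue of Θ_{−,r}(z)dz at z = w_s equals ρ_{rs}, for s ≠ r. -/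
open Filter Topology Finset

namespace psiReg

variable {M : ℕ} {w : Fin M → ℂ} (η : Fin (M - 1) → ℂ)

/-- Away from the poles both sides equal `(v - w_r)(v - w_s) ψ(v)`. -/
lemma sub_mul_eq_sub_mul {r s : Fin M} (hrs : r ≠ s) {v : ℂ} (hvr : v ≠ w r) (hvs : v ≠ w s) :
    (v - w s) * psiReg M w η r v = (v - w r) * psiReg M w η s v := by
  have hs : s ∈ univ.erase r := mem_erase.2 ⟨hrs.symm, mem_univ s⟩
  have hr : r ∈ univ.erase s := mem_erase.2 ⟨hrs, mem_univ r⟩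
  rw [psiReg, psiReg, ← mul_prod_erase _ _ hs, ← mul_prod_erase _ _ hr, erase_right_comm,
    mul_div_assoc', mul_div_assoc', mul_div_mul_left _ _ (sub_ne_zero.2 hvs),
    mul_div_mul_left _ _ (sub_ne_zero.2 hvr)]

lemma continuousAt (hw : Function.Injective w) (r : Fin M) :
    ContinuousAt (psiReg M w η r) (w r) := by
  have hden : ∏ t ∈ univ.erase r, (w r - w t) ≠ 0 :=
    prod_ne_zero_iff.2 fun t ht => sub_ne_zero.2 fun h => (ne_of_mem_erase ht) (hw h).symm
  unfold psiReg
  exact ContinuousAt.div (by fun_prop) (by fun_prop) hden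

lemma tendsto_sub_mul_div_sq (hw : Function.Injective w) (a b : ℂ) {r s : Fin M}
    (hrs : r ≠ s) :
    Tendsto (fun v => (v - w s) * (a * psiReg M w η r v * b / (v - w r) ^ 2))
      (𝓝[≠] w s) (𝓝 (a * psiReg M w η s (w s) * b / (w s - w r))) := by
  have hsr : w s ≠ w r := hw.ne hrs.symm
  have hcont : ContinuousAt (fun v => a * psiReg M w η s v * b / (v - w r)) (w s) :=
    (((continuousAt η hw s).const_mul a).mul_const b).div (continuousAt_id.sub continuousAt_const)
      (sub_ne_zero.2 hsr)
  refine hcont.continuousWithinAt.tendsto.congr' ?_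
  filter_upwards [self_mem_nhdsWithin, nhdsWithin_le_nhds (eventually_ne_nhds hsr)]
    with v (hvs : v ≠ w s) hvr
  have hvr' : v - w r ≠ 0 := sub_ne_zero.2 hvr
  calc a * psiReg M w η s v * b / (v - w r)
      = a * ((v - w r) * psiReg M w η s v) * b / (v - w r) ^ 2 := by field_simp
    _ = (v - w s) * (a * psiReg M w η r v * b / (v - w r) ^ 2) := by
      rw [← sub_mul_eq_sub_mul η hrs hvr hvs]; ring

end psiReg

theorem statement13_general (M : ℕ) (w : Fin M → ℂ) (hw : Function.Injective w)
    (ηp ηm : Fin (M - 1) → ℂ)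
    (lam : ℂ)
    (ρ : Fin M → Fin M → ℂ)
    (hρoff : ∀ r s, r ≠ s →
      ρ r s = lam / 2 * psiReg M w ηp r (w r) * psiReg M w ηm s (w s) / (w r - w s)) :
    ∀ r s : Fin M, r ≠ s →
      Filter.Tendsto
          (fun v : ℂ => (v - w s) *
            (lam / 2 * psiReg M w ηp r v * psiReg M w ηm r (w r) / (v - w r) ^ 2))
          (nhdsWithin (w s) {w s}ᶜ) (nhds (ρ s r)) ∧
      Filter.Tendsto
          (fun v : ℂ => (v - w s) *
            (-(lam / 2) * psiReg M w ηm r v * psiReg M w ηp r (w r) / (v - w r) ^ 2))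
          (nhdsWithin (w s) {w s}ᶜ) (nhds (ρ r s)) := by
  intro r s hrs
  have hρ : ρ r s =
      -(lam / 2) * psiReg M w ηm s (w s) * psiReg M w ηp r (w r) / (w s - w r) := by
    rw [hρoff r s hrs, ← neg_sub, div_neg]
    ring
  refine ⟨?_, ?_⟩
  · rw [hρoff s r hrs.symm]
    exact psiReg.tendsto_sub_mul_div_sq ηp hw _ _ hrs
  · rw [hρ]
    exact psiReg.tendsto_sub_mul_div_sq ηm hw _ _ hrs

/-- With `Θ_{+,r}(v) = (λ/2) ψ^r_+(v) ψ^r_-(w_r)/(v-w_r)²` and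
`Θ_{-,r}(v) = -(λ/2) ψ^r_-(v) ψ^r_+(w_r)/(v-w_r)²`, for `r ≠ s` the residue of the 1-form
`Θ_{+,r}(v) dv` at `v = w_s` equals `ρ_{sr}` and the residue of `Θ_{-,r}(v) dv` at
`v = w_s` equals `ρ_{rs}`: i.e. `(v - w_s) Θ_{±,r}(v)` tends to these values as
`v → w_s` within `ℂ \ {w_s}`. -/
theorem statement13 (M : ℕ) (hM : 1 ≤ M) (w : Fin M → ℂ) (hw : Function.Injective w)
    (ηp ηm : Fin (M - 1) → ℂ) (hηp : ∀ i r, ηp i ≠ w r) (hηm : ∀ i r, ηm i ≠ w r)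
    (lam : ℂ)
    (ρ : Fin M → Fin M → ℂ)
    (hρdiag : ∀ r, ρ r r = lam / 4 *
      (deriv (psiReg M w ηp r) (w r) * psiReg M w ηm r (w r)
        - psiReg M w ηp r (w r) * deriv (psiReg M w ηm r) (w r)))
    (hρoff : ∀ r s, r ≠ s →
      ρ r s = lam / 2 * psiReg M w ηp r (w r) * psiReg M w ηm s (w s) / (w r - w s)) :
    ∀ r s : Fin M, r ≠ s →
      Filter.Tendsto
          (fun v : ℂ => (v - w s) *
            (lam / 2 * psiReg M w ηp r v * psiReg M w ηm r (w r) / (v - w r) ^ 2))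
          (nhdsWithin (w s) {w s}ᶜ) (nhds (ρ s r)) ∧
      Filter.Tendsto
          (fun v : ℂ => (v - w s) *
            (-(lam / 2) * psiReg M w ηm r v * psiReg M w ηp r (w r) / (v - w r) ^ 2))
          (nhdsWithin (w s) {w s}ᶜ) (nhds (ρ r s)) :=
  statement13_general M w hw ηp ηm lam ρ hρoff
end

section
/- For every z ∈ ℂ with c·z+d ≠ 0, z ≠ z_+ and z ≠ z_−, one has (ad−bc)/(c·z+d)² · [ (1/(2𝕔γ))·( 1/(f(z)−z̃_+) − 1/(f(z)−z̃_−) ) − ℓ̃_1/(f(z)−a/c)² ] = (1/(2𝕔γ))·( 1/(z−z_+) − 1/(z−z_−) ) + ℓ^∞. That is, the Yang–Baxter deformation of the gauged twist function, transported back to the original spectral parameter, replaces the constant term −ℓ^∞ of the undeformed twist function by the pair of simple poles (1/(2𝕔γ))(1/(z−z_+) − 1/(z−z_−)). -/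
/-!
Write `f(z) = (az+b)/(cz+d)` and `D = ad - bc`, so that `f'(z) = D/(cz+d)²`. The identity
`f(z) - f(p) = D (z-p)/((cz+d)(cp+d))` gives `f'(z)/(f(z) - f(p)) = 1/(z-p) - c/(cz+d)`, and the
term `-c/(cz+d)` cancels in the difference of two such poles; the points `z̃_±` are exactly
`f(z_±)`. The double pole sits at `a/c = f(∞)`, where `f(z) - a/c = -D/(c(cz+d))`, so
`f'(z) ℓ̃₁/(f(z) - a/c)² = ℓ̃₁ c²/D = -ℓ^∞`.
-/

section Mobius

variable {K : Type*} [Field K] (a b c d : K)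

def mobius (z : K) : K := (a * z + b) / (c * z + d)

variable {a b c d}

theorem mobius_eq_div_sub {z : K} (hc : c ≠ 0) (hz : c * z + d ≠ 0) :
    mobius a b c d z = a / c - (a * d - b * c) / (c * (c * z + d)) := by
  rw [mobius, eq_sub_iff_add_eq, div_add_div _ _ hz (mul_ne_zero hc hz),
    div_eq_div_iff (mul_ne_zero hz (mul_ne_zero hc hz)) hc]
  ring

theorem mobius_sub_mobius_s16 {z p : K} (hz : c * z + d ≠ 0) (hp : c * p + d ≠ 0) :
    mobius a b c d z - mobius a b c d p
      = (a * d - b * c) * (z - p) / ((c * z + d) * (c * p + d)) := by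
  rw [mobius, mobius, div_sub_div _ _ hz hp]
  ring

theorem div_sq_mul_one_div_mobius_sub_mobius {z p : K} (hD : a * d - b * c ≠ 0)
    (hz : c * z + d ≠ 0) (hp : c * p + d ≠ 0) (hzp : z ≠ p) :
    (a * d - b * c) / (c * z + d) ^ 2 * (1 / (mobius a b c d z - mobius a b c d p))
      = 1 / (z - p) - c / (c * z + d) := by
  have hzp' : z - p ≠ 0 := sub_ne_zero.mpr hzp
  rw [mobius_sub_mobius_s16 hz hp]
  field_simp
  ring

theorem div_sq_mul_div_mobius_sub_div_sq {z : K} (ℓ : K) (hD : a * d - b * c ≠ 0) (hc : c ≠ 0)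
    (hz : c * z + d ≠ 0) :
    (a * d - b * c) / (c * z + d) ^ 2 * (ℓ / (mobius a b c d z - a / c) ^ 2)
      = ℓ * c ^ 2 / (a * d - b * c) := by
  rw [mobius_eq_div_sub hc hz, sub_sub_cancel_left, neg_sq, div_pow]
  field_simp

theorem mul_neg_div_sub_div_add (t : K) (hc : c ≠ 0) :
    c * (-d / c - (a * d - b * c) / (c ^ 2 * t)) + d = -(a * d - b * c) / (c * t) := by
  field_simp
  ring

theorem mul_neg_div_sub_div_add_ne_zero {t : K} (hD : a * d - b * c ≠ 0) (hc : c ≠ 0)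
    (ht : t ≠ 0) : c * (-d / c - (a * d - b * c) / (c ^ 2 * t)) + d ≠ 0 := by
  rw [mul_neg_div_sub_div_add t hc]
  exact div_ne_zero (neg_ne_zero.mpr hD) (mul_ne_zero hc ht)

theorem mobius_neg_div_sub_div {t : K} (hD : a * d - b * c ≠ 0) (hc : c ≠ 0) (ht : t ≠ 0) :
    mobius a b c d (-d / c - (a * d - b * c) / (c ^ 2 * t)) = a / c + t := by
  rw [mobius_eq_div_sub hc (mul_neg_div_sub_div_add_ne_zero hD hc ht),
    mul_neg_div_sub_div_add t hc, neg_div, mul_neg, div_neg, sub_neg_eq_add, mul_div_assoc',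
    mul_div_mul_left _ _ hc, div_div_cancel₀ hD]

end Mobius

theorem statement16_general (a b c d : ℝ) (hdet : (a : ℂ) * d - b * c ≠ 0) (hc : (c : ℂ) ≠ 0)
    (linf : ℂ) (η : ℝ) (hη : η ≠ 0) (cc : ℂ) (hcc : cc ≠ 0)
    (lt1 γ ztp ztm zp zm : ℂ)
    (hlt1 : lt1 = -linf * ((a : ℂ) * d - b * c) / (c : ℂ) ^ 2)
    (hztp : ztp = (a : ℂ) / c + cc * η) (hztm : ztm = (a : ℂ) / c - cc * η)
    (hzp : zp = -(d : ℂ) / c - ((a : ℂ) * d - b * c) / ((c : ℂ) ^ 2 * cc * η))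
    (hzm : zm = -(d : ℂ) / c + ((a : ℂ) * d - b * c) / ((c : ℂ) ^ 2 * cc * η))
    (u : ℂ) (hu : (c : ℂ) * u + d ≠ 0) (hup : u ≠ zp) (hum : u ≠ zm) :
    ((a : ℂ) * d - b * c) / ((c : ℂ) * u + d) ^ 2 *
        (1 / (2 * cc * γ) *
            (1 / ((((a : ℂ) * u + b) / ((c : ℂ) * u + d)) - ztp)
              - 1 / ((((a : ℂ) * u + b) / ((c : ℂ) * u + d)) - ztm))
          - lt1 / ((((a : ℂ) * u + b) / ((c : ℂ) * u + d)) - (a : ℂ) / c) ^ 2)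
      = 1 / (2 * cc * γ) * (1 / (u - zp) - 1 / (u - zm)) + linf := by
  have ht : (cc * η : ℂ) ≠ 0 := mul_ne_zero hcc (Complex.ofReal_ne_zero.mpr hη)
  have hzp' : zp = -(d : ℂ) / c - ((a : ℂ) * d - b * c) / ((c : ℂ) ^ 2 * (cc * η)) := by
    rw [hzp, mul_assoc]
  have hzm' : zm = -(d : ℂ) / c - ((a : ℂ) * d - b * c) / ((c : ℂ) ^ 2 * -(cc * η)) := by
    rw [hzm, mul_neg, div_neg, sub_neg_eq_add, mul_assoc]
  have hpole_p : c * zp + d ≠ 0 := hzp' ▸ mul_neg_div_sub_div_add_ne_zero hdet hc ht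
  have hpole_m : c * zm + d ≠ 0 :=
    hzm' ▸ mul_neg_div_sub_div_add_ne_zero hdet hc (neg_ne_zero.mpr ht)
  have hfp : ztp = mobius (a : ℂ) b c d zp := by
    rw [hztp, hzp', mobius_neg_div_sub_div hdet hc ht]
  have hfm : ztm = mobius (a : ℂ) b c d zm := by
    rw [hztm, hzm', mobius_neg_div_sub_div hdet hc (neg_ne_zero.mpr ht), sub_eq_add_neg]
  change _ * (_ * (1 / (mobius (a : ℂ) b c d u - ztp) - 1 / (mobius (a : ℂ) b c d u - ztm))
    - lt1 / (mobius (a : ℂ) b c d u - a / c) ^ 2) = _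
  rw [hfp, hfm, mul_sub, mul_left_comm, mul_sub,
    div_sq_mul_one_div_mobius_sub_mobius hdet hu hpole_p hup,
    div_sq_mul_one_div_mobius_sub_mobius hdet hu hpole_m hum,
    div_sq_mul_div_mobius_sub_div_sq _ hdet hc hu, sub_sub_sub_cancel_right, sub_eq_add_neg, hlt1]
  congr 1
  field_simp

/-- The Yang–Baxter deformation of the gauged twist function, transported back to the
original spectral parameter through `z̃ = f(z) = (az+b)/(cz+d)`, replaces the constant
term `-ℓ^∞` of the undeformed twist function by the pair of simple poles
`(1/(2𝕔γ))(1/(z-z₊) - 1/(z-z₋))`. -/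
theorem statement16 (a b c d : ℝ) (hdet : (a : ℂ) * d - b * c ≠ 0) (hc : (c : ℂ) ≠ 0)
    (linf : ℂ) (hlinf : linf ≠ 0) (η : ℝ) (hη : η ≠ 0) (cc : ℂ) (hcc : cc ≠ 0)
    (lt1 γ ztp ztm zp zm : ℂ)
    (hlt1 : lt1 = -linf * ((a : ℂ) * d - b * c) / (c : ℂ) ^ 2)
    (hγ : γ = (η : ℂ) / lt1)
    (hztp : ztp = (a : ℂ) / c + cc * η) (hztm : ztm = (a : ℂ) / c - cc * η)
    (hzp : zp = -(d : ℂ) / c - ((a : ℂ) * d - b * c) / ((c : ℂ) ^ 2 * cc * η))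
    (hzm : zm = -(d : ℂ) / c + ((a : ℂ) * d - b * c) / ((c : ℂ) ^ 2 * cc * η))
    (u : ℂ) (hu : (c : ℂ) * u + d ≠ 0) (hup : u ≠ zp) (hum : u ≠ zm) :
    ((a : ℂ) * d - b * c) / ((c : ℂ) * u + d) ^ 2 *
        (1 / (2 * cc * γ) *
            (1 / ((((a : ℂ) * u + b) / ((c : ℂ) * u + d)) - ztp)
              - 1 / ((((a : ℂ) * u + b) / ((c : ℂ) * u + d)) - ztm))
          - lt1 / ((((a : ℂ) * u + b) / ((c : ℂ) * u + d)) - (a : ℂ) / c) ^ 2)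
      = 1 / (2 * cc * γ) * (1 / (u - zp) - 1 / (u - zm)) + linf :=
  statement16_general a b c d hdet hc linf η hη cc hcc lt1 γ ztp ztm zp zm hlt1 hztp hztm hzp hzm u
    hu hup hum
end
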